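/- arXiv:1505.05112 — 4 statements merged into one kernel-verified Lean document; each statement's English description precedes it below -/
import Mathlib

section
/- Let c = (27/4)^{1/3}, let C > 0 and X > 0 be real numbers, and let B be a nonzero real number. Suppose ε is a real number with |ε| ≥ C and A = −c·(B²)^{1/3} + ε·X·(B²)^{−2/3}. Then 16·|4A³ + 27B²| ≥ 64·CX; in particular 16·|4A³ + 27B²| > CX. -/
/-!
Write `b = B^{2/3}`, so that `b³ = B²` and `B^{-4/3} = b⁻²`, and put `t = εX / b³`.
Expanding the cube, the constant `c` is exactly what makes the `b³` terms cancel
(`4c³ = 27`), leaving `4A³ + 27B² = 4εX (t² − 3ct + 3c²)`. The quadratic factor is at least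
`3c²/4 ≥ 1`, so `|4A³ + 27B²| ≥ 4|ε|X ≥ 4CX`.
-/

lemma rpow_one_third_pow_three {x : ℝ} (hx : 0 ≤ x) : (x ^ ((1 : ℝ) / 3)) ^ 3 = x := by
  simpa using Real.rpow_inv_natCast_pow (n := 3) hx (by norm_num)

lemma rpow_neg_two_thirds {x : ℝ} (hx : 0 ≤ x) :
    x ^ (-(2 : ℝ) / 3) = ((x ^ ((1 : ℝ) / 3)) ^ 2)⁻¹ := by
  rw [show -(2 : ℝ) / 3 = -((1 / 3) * (2 : ℕ)) by norm_num, Real.rpow_neg hx,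
    Real.rpow_mul_natCast hx]

lemma one_le_quadratic_of_pow_three_eq {c : ℝ} (hc : c ^ 3 = 27 / 4) (t : ℝ) :
    1 ≤ t ^ 2 - 3 * c * t + 3 * c ^ 2 := by
  have hc_pos : 0 < c := by
    by_contra! h
    nlinarith [pow_two_nonneg c]
  have h_c_sq : 4 / 3 ≤ c ^ 2 := by nlinarith [sq_nonneg (c - 2), sq_nonneg (c - 3 / 2)]
  nlinarith [sq_nonneg (t - 3 * c / 2)]

lemma disc_eq_mul_quadratic_of_pow_three_eq {c : ℝ} (hc : c ^ 3 = 27 / 4)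
    {b : ℝ} (hb : b ≠ 0) (e : ℝ) :
    4 * (-c * b + e * (b ^ 2)⁻¹) ^ 3 + 27 * b ^ 3
      = 4 * e * ((e / b ^ 3) ^ 2 - 3 * c * (e / b ^ 3) + 3 * c ^ 2) := by
  field_simp
  linear_combination (-4 * b ^ 9) * hc

lemma four_mul_abs_le_abs_disc_of_pow_three_eq {c : ℝ} (hc : c ^ 3 = 27 / 4)
    {b : ℝ} (hb : b ≠ 0) (e : ℝ) :
    4 * |e| ≤ |4 * (-c * b + e * (b ^ 2)⁻¹) ^ 3 + 27 * b ^ 3| := by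
  have hq := one_le_quadratic_of_pow_three_eq hc (e / b ^ 3)
  rw [disc_eq_mul_quadratic_of_pow_three_eq hc hb, abs_mul, abs_mul,
    abs_of_pos (zero_lt_one.trans_le hq), abs_of_pos (four_pos : (0 : ℝ) < 4)]
  nlinarith [abs_nonneg e]

/-- If `B ≠ 0`, `|ε| ≥ C` and `A = -c B^{2/3} + εX B^{-4/3}` where `c = (27/4)^{1/3}`,
then `|Δ_{A,B}| = 16|4A³+27B²| ≥ 64CX > CX`. -/
theorem disc_large_far_from_cusp (C X B ε : ℝ) (hC : 0 < C) (hX : 0 < X)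
    (hB : B ≠ 0) (hε : C ≤ |ε|)
    (A : ℝ)
    (hA : A = -((27 / 4 : ℝ) ^ ((1 : ℝ) / 3)) * (B ^ 2) ^ ((1 : ℝ) / 3)
      + ε * X * (B ^ 2) ^ (-(2 : ℝ) / 3)) :
    64 * C * X ≤ 16 * |4 * A ^ 3 + 27 * B ^ 2| ∧
      C * X < 16 * |4 * A ^ 3 + 27 * B ^ 2| := by
  have hB2 : 0 ≤ B ^ 2 := sq_nonneg B
  have hb : (B ^ 2) ^ ((1 : ℝ) / 3) ≠ 0 := (Real.rpow_pos_of_pos (by positivity) _).ne'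
  have hc : ((27 / 4 : ℝ) ^ ((1 : ℝ) / 3)) ^ 3 = 27 / 4 :=
    rpow_one_third_pow_three (by norm_num)
  have h_disc : 4 * (|ε| * X) ≤ |4 * A ^ 3 + 27 * B ^ 2| := by
    have := four_mul_abs_le_abs_disc_of_pow_three_eq hc hb (ε * X)
    rwa [rpow_one_third_pow_three hB2, ← rpow_neg_two_thirds hB2, ← hA, abs_mul,
      abs_of_pos hX] at this
  have h_CX : C * X ≤ |ε| * X := mul_le_mul_of_nonneg_right hε hX.le
  have h_large : 64 * C * X ≤ 16 * |4 * A ^ 3 + 27 * B ^ 2| := by linarith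
  exact ⟨h_large, by linarith [mul_pos hC hX]⟩
end

section
/- Let c = (27/4)^{1/3} and let C > 0, X > 0 be real numbers. For every pair of real numbers (A, B) satisfying 16·|4A³ + 27B²| < CX, either (i) B² < CX/27 and |A|³ < CX/2, or (ii) B ≠ 0 and |A + c·(B²)^{1/3}| < C·X·(B²)^{−2/3}. That is, every point with |Δ_{A,B}| < CX either lies in a box of dimensions comparable to (X^{1/3}, X^{1/2}) or lies within distance CX·B^{−4/3} of the curve 4A³ + 27B² = 0. -/
/-! Away from `B = 0`, put `s = c·(B²)^{1/3}`, so that `4A³ + 27B² = 4(A³ + s³)`. Factoring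
`A³ + s³ = (A + s)(A² - As + s²)` and bounding the quadratic factor below by `3s²/4 ≥ 3(B²)^{2/3}/4`
(as `c ≥ 1`) turns the smallness of the discriminant into smallness of `|A + s|`.
When `B = 0` the discriminant is `64A³` and the point lies in the box. -/

lemma abs_add_mul_sq_le_abs_pow_three_add (a s : ℝ) :
    |a + s| * (3 * s ^ 2 / 4) ≤ |a ^ 3 + s ^ 3| := by
  have hquad : 3 * s ^ 2 / 4 ≤ a ^ 2 - a * s + s ^ 2 := by nlinarith [sq_nonneg (a - s / 2)]
  calc |a + s| * (3 * s ^ 2 / 4) ≤ |a + s| * (a ^ 2 - a * s + s ^ 2) := by gcongr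
    _ = |(a + s) * (a ^ 2 - a * s + s ^ 2)| := by
      rw [abs_mul, abs_of_nonneg ((by positivity : 0 ≤ 3 * s ^ 2 / 4).trans hquad)]
    _ = |a ^ 3 + s ^ 3| := by ring_nf

namespace Real

lemma rpow_one_div_three_pow_three {x : ℝ} (hx : 0 ≤ x) : (x ^ ((1 : ℝ) / 3)) ^ 3 = x := by
  rw [one_div]
  exact_mod_cast rpow_inv_natCast_pow hx three_ne_zero

lemma rpow_neg_two_div_three {x : ℝ} (hx : 0 ≤ x) :
    x ^ (-(2 : ℝ) / 3) = ((x ^ ((1 : ℝ) / 3)) ^ 2)⁻¹ := by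
  rw [← rpow_natCast, ← rpow_mul hx, ← rpow_neg hx]
  norm_num

end Real

lemma abs_add_cusp_mul_sq_lt {A B K : ℝ} (h : 16 * |4 * A ^ 3 + 27 * B ^ 2| < K) :
    |A + (27 / 4 : ℝ) ^ ((1 : ℝ) / 3) * (B ^ 2) ^ ((1 : ℝ) / 3)|
      * ((B ^ 2) ^ ((1 : ℝ) / 3)) ^ 2 < K := by
  set c : ℝ := (27 / 4 : ℝ) ^ ((1 : ℝ) / 3)
  set t : ℝ := (B ^ 2) ^ ((1 : ℝ) / 3)
  have hc : 1 ≤ c := Real.one_le_rpow (by norm_num) (by norm_num)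
  have hdisc : 4 * A ^ 3 + 27 * B ^ 2 = 4 * (A ^ 3 + (c * t) ^ 3) := by
    rw [mul_pow, Real.rpow_one_div_three_pow_three (by norm_num),
      Real.rpow_one_div_three_pow_three (sq_nonneg B)]
    ring
  have hK : 0 < K := (by positivity : (0 : ℝ) ≤ 16 * _).trans_lt h
  have hct : t ^ 2 ≤ (c * t) ^ 2 := by
    rw [mul_pow]
    exact le_mul_of_one_le_left (sq_nonneg t) (one_le_pow₀ hc)
  have key := abs_add_mul_sq_le_abs_pow_three_add A (c * t)
  rw [hdisc, abs_mul, abs_of_pos (four_pos : (0 : ℝ) < 4)] at h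
  linarith [mul_le_mul_of_nonneg_left hct (abs_nonneg (A + c * t))]

theorem small_disc_in_box_or_near_cusp_general (C X : ℝ)
    (A B : ℝ) (h : 16 * |4 * A ^ 3 + 27 * B ^ 2| < C * X) :
    (B ^ 2 < C * X / 27 ∧ |A| ^ 3 < C * X / 2) ∨
      (B ≠ 0 ∧ |A + (27 / 4 : ℝ) ^ ((1 : ℝ) / 3) * (B ^ 2) ^ ((1 : ℝ) / 3)|
        < C * X * (B ^ 2) ^ (-(2 : ℝ) / 3)) := by
  rcases eq_or_ne B 0 with rfl | hB
  · left
    rw [zero_pow two_ne_zero, mul_zero, add_zero, abs_mul, abs_of_pos (four_pos : (0 : ℝ) < 4), abs_pow] at h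
    constructor <;> nlinarith [pow_nonneg (abs_nonneg A) 3]
  · right
    have ht : 0 < ((B ^ 2) ^ ((1 : ℝ) / 3)) ^ 2 := by positivity
    rw [Real.rpow_neg_two_div_three (sq_nonneg B), ← div_eq_mul_inv, lt_div_iff₀ ht]
    exact ⟨hB, abs_add_cusp_mul_sq_lt h⟩

/-- Every point `(A, B)` with `|Δ_{A,B}| = 16|4A³+27B²| < CX` either lies in a box
of dimensions comparable to `(X^{1/3}, X^{1/2})`, or lies within horizontal distance
`CX·B^{-4/3}` of the curve `4A³ + 27B² = 0`, i.e. `A = -c(B²)^{1/3}` with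
`c = (27/4)^{1/3}`. -/
theorem small_disc_in_box_or_near_cusp (C X : ℝ) (hC : 0 < C) (hX : 0 < X)
    (A B : ℝ) (h : 16 * |4 * A ^ 3 + 27 * B ^ 2| < C * X) :
    (B ^ 2 < C * X / 27 ∧ |A| ^ 3 < C * X / 2) ∨
      (B ≠ 0 ∧ |A + (27 / 4 : ℝ) ^ ((1 : ℝ) / 3) * (B ^ 2) ^ ((1 : ℝ) / 3)|
        < C * X * (B ^ 2) ^ (-(2 : ℝ) / 3)) :=
  small_disc_in_box_or_near_cusp_general C X A B h
end

section
/- Let c = (27/4)^{1/3} and let ε₀ be the unique positive real root of the equation 64x(3c² + x²) = 3/4 (approximately 0.0011). Then for every real number B with |B| ≥ 1 and every real ε with |ε| < ε₀, if A = −c·(B²)^{1/3} + ε·(B²)^{−2/3}, then 16·|4A³ + 27B²| < 1. -/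
set_option maxHeartbeats 1000000


/-- Let `c = (27/4)^{1/3}` and `ε₀` the positive root of `64x(3c² + x²) = 3/4`.
For `|B| ≥ 1` and `|ε| < ε₀`, if `A = -c(B²)^{1/3} + ε(B²)^{-4/3}` then
`|Δ_{A,B}| = 16|4A³ + 27B²| < 1`. -/
theorem disc_lt_one_near_cusp (ε₀ : ℝ) (hε₀_pos : 0 < ε₀)
    (hε₀_root : 64 * ε₀ * (3 * ((27 / 4 : ℝ) ^ ((1 : ℝ) / 3)) ^ 2 + ε₀ ^ 2) = 3 / 4)
    (B ε A : ℝ) (hB : 1 ≤ |B|) (hε : |ε| < ε₀)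
    (hA : A = -((27 / 4 : ℝ) ^ ((1 : ℝ) / 3)) * (B ^ 2) ^ ((1 : ℝ) / 3)
      + ε * (B ^ 2) ^ (-(2 : ℝ) / 3)) :
    16 * |4 * A ^ 3 + 27 * B ^ 2| < 1 := by
  set c : ℝ := (27 / 4 : ℝ) ^ ((1 : ℝ) / 3) with hcdef
  have hc1 : (1 : ℝ) ≤ c := Real.one_le_rpow (by norm_num) (by norm_num)
  have hc0 : (0 : ℝ) < c := lt_of_lt_of_le one_pos hc1
  have hc3 : c ^ 3 = 27 / 4 := by
    rw [hcdef, ← Real.rpow_natCast ((27/4:ℝ) ^ ((1:ℝ)/3)) 3,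
      ← Real.rpow_mul (by norm_num : (0:ℝ) ≤ 27/4)]
    norm_num
  have hB2 : (1 : ℝ) ≤ B ^ 2 := by
    have h := sq_abs B
    nlinarith [abs_nonneg B]
  have hB2pos : (0 : ℝ) < B ^ 2 := lt_of_lt_of_le one_pos hB2
  set u : ℝ := (B ^ 2) ^ ((1 : ℝ) / 3) with hudef
  have hu1 : (1 : ℝ) ≤ u := Real.one_le_rpow hB2 (by norm_num)
  have hu0 : (0 : ℝ) < u := lt_of_lt_of_le one_pos hu1
  have hune : u ≠ 0 := ne_of_gt hu0
  have hu3 : u ^ 3 = B ^ 2 := by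
    rw [hudef, ← Real.rpow_natCast ((B^2) ^ ((1:ℝ)/3)) 3, ← Real.rpow_mul hB2pos.le]
    norm_num
  have hv : (B ^ 2) ^ (-(2 : ℝ) / 3) = (u⁻¹) ^ 2 := by
    rw [inv_pow, hudef, ← Real.rpow_natCast ((B^2)^((1:ℝ)/3)) 2,
      ← Real.rpow_mul hB2pos.le, ← Real.rpow_neg hB2pos.le]
    norm_num
  have hw : u * u⁻¹ = 1 := mul_inv_cancel₀ hune
  clear hcdef hudef
  clear_value c u
  have hId : 4 * A ^ 3 + 27 * B ^ 2 =
      12 * c ^ 2 * ε - 12 * c * ε ^ 2 * (u⁻¹) ^ 3 + 4 * ε ^ 3 * (u⁻¹) ^ 6 := by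
    rw [hA, hv, ← hu3]
    linear_combination (-4*u^3) * hc3 + (12*c^2*ε*(u*u⁻¹+1) - 12*c*ε^2*(u⁻¹)^3) * hw
  have hw1 : u⁻¹ ≤ 1 := by
    rw [inv_le_one_iff₀]; right; exact hu1
  have hw0 : (0:ℝ) < u⁻¹ := inv_pos.mpr hu0
  set E := |ε| with hEdef
  clear_value E
  have hE0 : (0:ℝ) ≤ E := hEdef ▸ abs_nonneg ε
  have habs : |4 * A ^ 3 + 27 * B ^ 2| ≤ 12 * c ^ 2 * E + 12 * c * E ^ 2 + 4 * E ^ 3 := by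
    rw [hId]
    have t1 : |12 * c ^ 2 * ε| = 12 * c ^ 2 * E := by
      rw [abs_mul, abs_of_nonneg (by positivity : (0:ℝ) ≤ 12 * c ^ 2), ← hEdef]
    have t2 : |12 * c * ε ^ 2 * (u⁻¹) ^ 3| ≤ 12 * c * E ^ 2 := by
      rw [abs_mul, abs_mul, abs_of_nonneg (by positivity : (0:ℝ) ≤ 12 * c),
        abs_of_nonneg (by positivity : (0:ℝ) ≤ (u⁻¹)^3), abs_pow, ← hEdef]
      have h3 : (u⁻¹)^3 ≤ 1 := pow_le_one₀ hw0.le hw1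
      nlinarith [mul_nonneg (mul_nonneg hc0.le (sq_nonneg E)) (sub_nonneg.mpr h3)]
    have t3 : |4 * ε ^ 3 * (u⁻¹) ^ 6| ≤ 4 * E ^ 3 := by
      rw [abs_mul, abs_mul, abs_of_nonneg (by norm_num : (0:ℝ) ≤ (4:ℝ)),
        abs_of_nonneg (by positivity : (0:ℝ) ≤ (u⁻¹)^6), abs_pow, ← hEdef]
      have h6 : (u⁻¹)^6 ≤ 1 := pow_le_one₀ hw0.le hw1
      nlinarith [mul_nonneg (pow_nonneg hE0 3) (sub_nonneg.mpr h6)]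
    calc |12 * c ^ 2 * ε - 12 * c * ε ^ 2 * (u⁻¹) ^ 3 + 4 * ε ^ 3 * (u⁻¹) ^ 6|
        ≤ |12 * c ^ 2 * ε - 12 * c * ε ^ 2 * (u⁻¹) ^ 3| + |4 * ε ^ 3 * (u⁻¹) ^ 6| :=
          abs_add_le _ _
      _ ≤ |12 * c ^ 2 * ε| + |12 * c * ε ^ 2 * (u⁻¹) ^ 3| + |4 * ε ^ 3 * (u⁻¹) ^ 6| := by
          have := abs_sub (12 * c ^ 2 * ε) (12 * c * ε ^ 2 * (u⁻¹) ^ 3)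
          linarith
      _ ≤ 12 * c ^ 2 * E + 12 * c * E ^ 2 + 4 * E ^ 3 := by rw [t1]; linarith
  have hEε : E < ε₀ := hε
  have hcub : E ^ 3 ≤ ε₀ ^ 3 := pow_le_pow_left₀ hE0 hEε.le 3
  have hsq : E ^ 2 ≤ ε₀ ^ 2 := pow_le_pow_left₀ hE0 hEε.le 2
  have hε₀small : ε₀ * c ^ 2 ≤ 1 / 256 := by
    nlinarith [pow_pos hε₀_pos 3, hε₀_root]
  have hε₀le : ε₀ ≤ 1 / 256 := by
    nlinarith [mul_nonneg (by nlinarith : (0:ℝ) ≤ c^2 - 1) hε₀_pos.le]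
  have s3 : c * ε₀ ^ 2 ≤ (1/256) * ε₀ := by
    nlinarith [mul_le_mul_of_nonneg_right hε₀small hε₀_pos.le,
      mul_nonneg (mul_nonneg hc0.le (sub_nonneg.mpr hc1)) (sq_nonneg ε₀)]
  have key : 16 * (12 * c ^ 2 * E + 12 * c * E ^ 2 + 4 * E ^ 3) < 1 := by
    have s1 : c ^ 2 * E < c ^ 2 * ε₀ :=
      mul_lt_mul_of_pos_left hEε (by positivity)
    have s2 : c * E ^ 2 ≤ c * ε₀ ^ 2 := mul_le_mul_of_nonneg_left hsq hc0.le
    nlinarith [hε₀_root, hε₀le]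
  calc 16 * |4 * A ^ 3 + 27 * B ^ 2|
      ≤ 16 * (12 * c ^ 2 * E + 12 * c * E ^ 2 + 4 * E ^ 3) := by linarith
    _ < 1 := key
end

section
/- Let N(X) denote the number of pairs of integers (A, B) that are weakly minimal (no prime p satisfies p⁴ ∣ A and p⁶ ∣ B), satisfy 4A³ + 27B² ≠ 0, and satisfy max(B², |A|³) < X. Then N(X) = 4·ζ(10)^{−1}·X^{5/6} + O(X^{1/2}); precisely, there exists a constant K > 0 such that for all real X ≥ 1, |N(X) − 4ζ(10)^{−1} X^{5/6}| ≤ K·X^{1/2}. -/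
/-- `ζ(10)`, the value of the Riemann zeta function at `10`, as a positive real
number: `ζ(10) = ∑_{n ≥ 1} n^{-10}` (the `n = 0` term below is `0`). -/
noncomputable def zetaTen : ℝ := ∑' n : ℕ, ((n : ℝ) ^ 10)⁻¹

/-- A pair of integers `(A, B)` is weakly minimal if no prime `p` satisfies
`p⁴ ∣ A` and `p⁶ ∣ B`. -/
def WeaklyMinimal (A B : ℤ) : Prop :=
  ∀ p : ℕ, p.Prime → ¬((p : ℤ) ^ 4 ∣ A ∧ (p : ℤ) ^ 6 ∣ B)

/-!
Every pair `(A, B) ≠ (0, 0)` is uniquely `(d⁴A₀, d⁶B₀)` with `d ≥ 1` and `(A₀, B₀)` weakly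
minimal, and this rescaling multiplies the naive height by `d¹²` and `4A³ + 27B²` by `d¹²`. So the
number `M(X)` of all pairs with `4A³ + 27B² ≠ 0` and height `< X` is `∑_d N(X / d¹²)`, and Möbius
inversion gives `N(X) = ∑_d μ(d) M(X / d¹²)`. Counting lattice points in the box
`|A| < Y^{1/3}, |B| < Y^{1/2}`, minus at most one point per `B` on `4A³ + 27B² = 0`, gives
`M(Y) = 4Y^{5/6} + O(Y^{1/2})`. Summing against `μ(d)` yields the main term
`4X^{5/6} ∑ μ(d) d⁻¹⁰ = 4ζ(10)⁻¹X^{5/6}` and an error at most `8ζ(6)X^{1/2}`.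
-/

open Finset ArithmeticFunction
open scoped ArithmeticFunction.Moebius

lemma ofReal_zetaTen : (zetaTen : ℂ) = riemannZeta 10 := by
  rw [zetaTen, Complex.ofReal_tsum, show (10 : ℂ) = (10 : ℕ) by norm_num,
    zeta_nat_eq_tsum_of_gt_one (by norm_num)]
  push_cast
  simp [one_div]

lemma hasSum_moebius_div_pow_ten : HasSum (fun n : ℕ => (μ n : ℝ) / (n : ℝ) ^ 10) zetaTen⁻¹ := by
  have h10 : 1 < (10 : ℂ).re := by norm_num
  have hL : LSeries (fun n => (μ n : ℂ)) 10 = ((zetaTen⁻¹ : ℝ) : ℂ) := by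
    rw [Complex.ofReal_inv, ofReal_zetaTen, ← LSeries_one_eq_riemannZeta h10]
    exact eq_inv_of_mul_eq_one_right (LSeries_one_mul_Lseries_moebius h10)
  have := (LSeriesSummable_moebius_iff.mpr h10).LSeriesHasSum
  rw [LSeriesHasSum, hL] at this
  refine Complex.hasSum_ofReal.mp (this.congr_fun fun n => ?_)
  rcases eq_or_ne n 0 with rfl | hn
  · simp
  · rw [LSeries.term_of_ne_zero hn, show (10 : ℂ) = (10 : ℕ) by norm_num, Complex.cpow_natCast]
    push_cast; rfl

lemma sum_Icc_mul_eq_sum_filter_dvd {M : Type*} [AddCommMonoid M] (f : ℕ → M) {T d : ℕ}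
    (hd : 0 < d) (hf : ∀ n, T < n → f n = 0) :
    ∑ e ∈ Icc 1 T, f (d * e) = ∑ n ∈ Icc 1 T with d ∣ n, f n := by
  refine sum_bij_ne_zero (fun e _ _ => d * e) (fun e he hfe => ?_)
    (fun e₁ _ _ e₂ _ _ h => Nat.eq_of_mul_eq_mul_left hd h) (fun n hn hfn => ?_)
    (fun _ _ _ => rfl)
  · rw [mem_Icc] at he
    simp only [mem_filter, mem_Icc, dvd_mul_right, and_true]
    exact ⟨Nat.mul_pos hd he.1, not_lt.mp (mt (hf _) hfe)⟩
  · obtain ⟨hn, e, rfl⟩ := mem_filter.mp hn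
    rw [mem_Icc] at hn
    have he : 1 ≤ e := Nat.pos_of_ne_zero (by rintro rfl; simp at hn)
    exact ⟨e, mem_Icc.mpr ⟨he, le_trans (Nat.le_mul_of_pos_left e hd) hn.2⟩, hfn, rfl⟩

lemma sum_Icc_moebius_smul_sum_Icc_mul {R : Type*} [AddCommGroup R] (f : ℕ → R) {T : ℕ}
    (hf : ∀ n, T < n → f n = 0) :
    ∑ d ∈ Icc 1 T, μ d • ∑ e ∈ Icc 1 T, f (d * e) = f 1 := by
  calc ∑ d ∈ Icc 1 T, μ d • ∑ e ∈ Icc 1 T, f (d * e)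
      = ∑ d ∈ Icc 1 T, ∑ n ∈ Icc 1 T with d ∣ n, μ d • f n :=
        sum_congr rfl fun d hd => by
          rw [sum_Icc_mul_eq_sum_filter_dvd f (mem_Icc.mp hd).1 hf, smul_sum]
    _ = ∑ n ∈ Icc 1 T, ∑ d ∈ n.divisors, μ d • f n := by
        refine sum_comm' fun d n => ?_
        simp only [mem_filter, mem_Icc, Nat.mem_divisors]
        constructor
        · rintro ⟨-, hn, hdn⟩; exact ⟨⟨hdn, by omega⟩, hn⟩
        · rintro ⟨⟨hdn, -⟩, hn⟩
          exact ⟨⟨Nat.pos_of_dvd_of_pos hdn (by omega), (Nat.le_of_dvd (by omega) hdn).trans hn.2⟩,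
            hn, hdn⟩
    _ = ∑ n ∈ Icc 1 T, if n = 1 then f n else 0 := by
        refine sum_congr rfl fun n _ => ?_
        rw [← sum_smul, ← coe_mul_zeta_apply, moebius_mul_coe_zeta, one_apply]
        split_ifs <;> simp
    _ = f 1 := by
        rw [sum_ite_eq']
        split_ifs with h
        · rfl
        · exact (hf 1 (by simpa using h)).symm

-- `y² = x³ + Ax + B` and `y² = x³ + d⁴Ax + d⁶B` are isomorphic via `(x, y) ↦ (d²x, d³y)`.
def weierstrassScale (d : ℕ) (p : ℤ × ℤ) : ℤ × ℤ := ((d : ℤ) ^ 4 * p.1, (d : ℤ) ^ 6 * p.2)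

lemma WeaklyMinimal.eq_one_of_pow_dvd {A B : ℤ} (h : WeaklyMinimal A B) {k : ℕ}
    (hA : (k : ℤ) ^ 4 ∣ A) (hB : (k : ℤ) ^ 6 ∣ B) : k = 1 := by
  by_contra hk
  obtain ⟨p, hp, hpk⟩ := Nat.exists_prime_and_dvd hk
  have hpk : (p : ℤ) ∣ k := Int.natCast_dvd_natCast.mpr hpk
  exact h p hp ⟨(pow_dvd_pow_of_dvd hpk 4).trans hA, (pow_dvd_pow_of_dvd hpk 6).trans hB⟩

lemma pow_dvd_of_pow_mul_eq_pow_mul {d e n : ℕ} (hde : d.Coprime e) {a b : ℤ}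
    (h : (d : ℤ) ^ n * a = (e : ℤ) ^ n * b) : (e : ℤ) ^ n ∣ a :=
  (Nat.isCoprime_iff_coprime.mpr hde.symm).pow.dvd_of_dvd_mul_left ⟨b, by rw [h, mul_comm]⟩

lemma dvd_of_weierstrassScale_eq {d e : ℕ} {p q : ℤ × ℤ} (hp : WeaklyMinimal p.1 p.2)
    (h : weierstrassScale d p = weierstrassScale e q) : e ∣ d := by
  obtain ⟨d', e', hcop, hd, he⟩ := Nat.exists_coprime d e
  generalize d.gcd e = g at hd he
  subst hd he
  rcases eq_or_ne g 0 with rfl | hg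
  · simp
  have hg : (g : ℤ) ≠ 0 := by exact_mod_cast hg
  simp only [weierstrassScale, Prod.mk.injEq] at h
  push_cast at h
  have h₄ : (d' : ℤ) ^ 4 * p.1 = (e' : ℤ) ^ 4 * q.1 :=
    mul_left_cancel₀ (pow_ne_zero 4 hg) (by linear_combination h.1)
  have h₆ : (d' : ℤ) ^ 6 * p.2 = (e' : ℤ) ^ 6 * q.2 :=
    mul_left_cancel₀ (pow_ne_zero 6 hg) (by linear_combination h.2)
  have he' : e' = 1 := hp.eq_one_of_pow_dvd (pow_dvd_of_pow_mul_eq_pow_mul hcop h₄)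
    (pow_dvd_of_pow_mul_eq_pow_mul hcop h₆)
  rw [he', one_mul]
  exact Dvd.intro_left d' rfl

lemma eq_of_weierstrassScale_eq {d e : ℕ} {p q : ℤ × ℤ} (hp : WeaklyMinimal p.1 p.2)
    (hq : WeaklyMinimal q.1 q.2) (h : weierstrassScale d p = weierstrassScale e q) : d = e :=
  Nat.dvd_antisymm (dvd_of_weierstrassScale_eq hq h.symm) (dvd_of_weierstrassScale_eq hp h)

lemma weierstrassScale_injective {d : ℕ} (hd : d ≠ 0) : Function.Injective (weierstrassScale d) := by
  intro p q h
  have hd : (d : ℤ) ≠ 0 := by exact_mod_cast hd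
  simp only [weierstrassScale, Prod.mk.injEq] at h
  exact Prod.ext (mul_left_cancel₀ (pow_ne_zero 4 hd) h.1) (mul_left_cancel₀ (pow_ne_zero 6 hd) h.2)

lemma le_natAbs_of_pow_dvd {k n : ℕ} {A : ℤ} (hn : n ≠ 0) (hA : A ≠ 0) (h : (k : ℤ) ^ n ∣ A) :
    k ≤ A.natAbs :=
  calc k ≤ k ^ n := Nat.le_self_pow hn k
    _ ≤ A.natAbs := Nat.le_of_dvd (Int.natAbs_pos.mpr hA) (by simpa using Int.natAbs_dvd_natAbs.mpr h)

lemma exists_weierstrassScale_eq {q : ℤ × ℤ} (hq : q ≠ 0) :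
    ∃ d, 0 < d ∧ ∃ p : ℤ × ℤ, WeaklyMinimal p.1 p.2 ∧ weierstrassScale d p = q := by
  classical
  let P : ℕ → Prop := fun k => (k : ℤ) ^ 4 ∣ q.1 ∧ (k : ℤ) ^ 6 ∣ q.2
  have hbound : ∀ k, P k → k ≤ q.1.natAbs + q.2.natAbs := by
    rintro k ⟨h₄, h₆⟩
    by_cases h₁ : q.1 = 0
    · have h₂ : q.2 ≠ 0 := fun h₂ => hq (Prod.ext h₁ h₂)
      have := le_natAbs_of_pow_dvd (by norm_num) h₂ h₆
      omega
    · have := le_natAbs_of_pow_dvd (by norm_num) h₁ h₄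
      omega
  have hP₁ : P 1 := by simp [P]
  set g := Nat.findGreatest P (q.1.natAbs + q.2.natAbs)
  have hg : P g := Nat.findGreatest_spec (hbound 1 hP₁) hP₁
  have hg₁ : 1 ≤ g := Nat.le_findGreatest (hbound 1 hP₁) hP₁
  obtain ⟨⟨A, hA⟩, ⟨B, hB⟩⟩ := hg
  refine ⟨g, hg₁, (A, B), fun p hp ⟨hpA, hpB⟩ => ?_, Prod.ext hA.symm hB.symm⟩
  have hgp : P (g * p) := by
    constructor
    · rw [hA]; push_cast; rw [mul_pow]; exact mul_dvd_mul_left _ hpA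
    · rw [hB]; push_cast; rw [mul_pow]; exact mul_dvd_mul_left _ hpB
  exact Nat.findGreatest_is_greatest (lt_mul_of_one_lt_right hg₁ hp.one_lt) (hbound _ hgp) hgp

def naiveHeight (p : ℤ × ℤ) : ℝ := max ((p.2 : ℝ) ^ 2) (|(p.1 : ℝ)| ^ 3)

def weierstrassSet (X : ℝ) : Set (ℤ × ℤ) :=
  {p | 4 * p.1 ^ 3 + 27 * p.2 ^ 2 ≠ 0 ∧ naiveHeight p < X}

lemma one_le_naiveHeight {p : ℤ × ℤ} (hp : p ≠ 0) : 1 ≤ naiveHeight p := by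
  by_cases h₁ : p.1 = 0
  · have h₂ : (1 : ℝ) ≤ |(p.2 : ℝ)| := by
      exact_mod_cast Int.one_le_abs fun h₂ => hp (Prod.ext h₁ h₂)
    exact le_max_of_le_left (by rw [← sq_abs]; nlinarith)
  · have h₁ : (1 : ℝ) ≤ |(p.1 : ℝ)| := by exact_mod_cast Int.one_le_abs h₁
    exact le_max_of_le_right (one_le_pow₀ h₁)

lemma weierstrassSet_eq_empty {X : ℝ} (hX : X ≤ 1) : weierstrassSet X = ∅ := by
  refine Set.eq_empty_of_forall_notMem fun p ⟨hΔ, hH⟩ => ?_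
  have hp : p ≠ 0 := by rintro rfl; simp at hΔ
  linarith [one_le_naiveHeight hp]

lemma naiveHeight_weierstrassScale (d : ℕ) (p : ℤ × ℤ) :
    naiveHeight (weierstrassScale d p) = (d : ℝ) ^ 12 * naiveHeight p := by
  simp only [naiveHeight, weierstrassScale]
  push_cast
  rw [mul_max_of_nonneg _ _ (by positivity), abs_mul, abs_pow, Nat.abs_cast]
  ring_nf

lemma weierstrassScale_mem_weierstrassSet_iff {d : ℕ} (hd : d ≠ 0) {p : ℤ × ℤ} {X : ℝ} :
    weierstrassScale d p ∈ weierstrassSet X ↔ p ∈ weierstrassSet (X / (d : ℝ) ^ 12) := by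
  have hΔ : 4 * (weierstrassScale d p).1 ^ 3 + 27 * (weierstrassScale d p).2 ^ 2
      = (d : ℤ) ^ 12 * (4 * p.1 ^ 3 + 27 * p.2 ^ 2) := by
    simp only [weierstrassScale]; ring
  simp only [weierstrassSet, Set.mem_ofPred_eq, hΔ, naiveHeight_weierstrassScale,
    mul_ne_zero_iff, ne_eq, pow_eq_zero_iff', Nat.cast_eq_zero, hd, false_and, not_false_eq_true,
    true_and, lt_div_iff₀' (by positivity : (0 : ℝ) < (d : ℝ) ^ 12)]

lemma mem_Ioo_neg_ceil_ceil_iff {c : ℝ} {n : ℤ} : n ∈ Ioo (-⌈c⌉) ⌈c⌉ ↔ |(n : ℝ)| < c := by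
  rw [mem_Ioo, abs_lt, neg_lt, Int.lt_ceil, Int.lt_ceil]
  push_cast
  rw [neg_lt]

lemma abs_card_Ioo_neg_ceil_ceil_sub_le {c : ℝ} (hc : 0 ≤ c) :
    |(#(Ioo (-⌈c⌉) ⌈c⌉) : ℝ) - 2 * c| ≤ 1 := by
  have h₁ := Int.le_ceil c
  have h₂ := Int.ceil_lt_add_one c
  rw [Int.card_Ioo, abs_le]
  rcases hc.eq_or_lt with rfl | hc
  · norm_num
  have hpos : 0 < ⌈c⌉ := Int.ceil_pos.mpr hc
  rw [show ⌈c⌉ - -⌈c⌉ - 1 = 2 * ⌈c⌉ - 1 by ring, ← Int.cast_natCast, Int.toNat_of_nonneg (by omega)]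
  push_cast
  constructor <;> linarith

lemma abs_lt_rpow_inv_iff {x y : ℝ} {n : ℕ} (hn : n ≠ 0) (hy : 0 ≤ y) :
    |x| < y ^ (n : ℝ)⁻¹ ↔ |x| ^ n < y := by
  rw [Real.lt_rpow_inv_iff_of_pos (abs_nonneg x) hy (by positivity), Real.rpow_natCast]

lemma weierstrassSet_eq_filter {X : ℝ} (hX : 0 ≤ X) :
    weierstrassSet X = ↑{p ∈ Ioo (-⌈X ^ (3 : ℝ)⁻¹⌉) ⌈X ^ (3 : ℝ)⁻¹⌉ ×ˢ
      Ioo (-⌈X ^ (2 : ℝ)⁻¹⌉) ⌈X ^ (2 : ℝ)⁻¹⌉ | 4 * p.1 ^ 3 + 27 * p.2 ^ 2 ≠ 0} := by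
  ext p
  have h₃ := abs_lt_rpow_inv_iff (x := (p.1 : ℝ)) (n := 3) (by norm_num) hX
  have h₂ := abs_lt_rpow_inv_iff (x := (p.2 : ℝ)) (n := 2) (by norm_num) hX
  push_cast at h₃ h₂
  simp only [weierstrassSet, naiveHeight, Set.mem_ofPred_eq, coe_filter, mem_product,
    mem_Ioo_neg_ceil_ceil_iff, h₃, h₂, sq_abs, max_lt_iff]
  tauto

lemma weierstrassSet_finite (X : ℝ) : (weierstrassSet X).Finite := by
  rcases le_total X 0 with hX | hX
  · simp [weierstrassSet_eq_empty (hX.trans zero_le_one)]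
  · rw [weierstrassSet_eq_filter hX]
    exact finite_toSet _

lemma card_filter_disc_eq_zero_le (s t : Finset ℤ) :
    #{p ∈ s ×ˢ t | 4 * p.1 ^ 3 + 27 * p.2 ^ 2 = 0} ≤ #t := by
  refine card_le_card_of_injOn Prod.snd (fun p hp => ?_) fun p hp q hq hpq => ?_
  · simp only [coe_filter, mem_product, Set.mem_ofPred_eq] at hp
    exact hp.1.2
  · simp only [coe_filter, Set.mem_ofPred_eq] at hp hq
    have hcube : p.1 ^ 3 = q.1 ^ 3 := by
      have := hp.2; rw [hpq] at this; linarith [hq.2]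
    exact Prod.ext ((Odd.pow_inj (by decide)).mp hcube) hpq

lemma abs_card_filter_disc_ne_zero_sub_le {a b : ℝ} (ha : 1 ≤ a) (hab : a ≤ b) :
    |(#{p ∈ Ioo (-⌈a⌉) ⌈a⌉ ×ˢ Ioo (-⌈b⌉) ⌈b⌉ | 4 * p.1 ^ 3 + 27 * p.2 ^ 2 ≠ 0} : ℝ) - 4 * (a * b)|
      ≤ 8 * b := by
  have hsplit := card_filter_add_card_filter_not (s := Ioo (-⌈a⌉) ⌈a⌉ ×ˢ Ioo (-⌈b⌉) ⌈b⌉)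
    (fun p : ℤ × ℤ => 4 * p.1 ^ 3 + 27 * p.2 ^ 2 ≠ 0)
  simp only [ne_eq, not_not, card_product] at hsplit
  have hbad := card_filter_disc_eq_zero_le (Ioo (-⌈a⌉) ⌈a⌉) (Ioo (-⌈b⌉) ⌈b⌉)
  have hx := abs_le.mp (abs_card_Ioo_neg_ceil_ceil_sub_le (by linarith : 0 ≤ a))
  have hy := abs_le.mp (abs_card_Ioo_neg_ceil_ceil_sub_le (by linarith : 0 ≤ b))
  simp only [ne_eq]
  generalize #(Ioo (-⌈a⌉) ⌈a⌉) = x at *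
  generalize #(Ioo (-⌈b⌉) ⌈b⌉) = y at *
  generalize #{p ∈ Ioo (-⌈a⌉) ⌈a⌉ ×ˢ Ioo (-⌈b⌉) ⌈b⌉ | 4 * p.1 ^ 3 + 27 * p.2 ^ 2 = 0} = z at *
  generalize #{p ∈ Ioo (-⌈a⌉) ⌈a⌉ ×ˢ Ioo (-⌈b⌉) ⌈b⌉ | ¬4 * p.1 ^ 3 + 27 * p.2 ^ 2 = 0} = w at *
  have hsplit : (w : ℝ) = x * y - z := by rw [eq_sub_iff_add_eq]; exact_mod_cast hsplit
  have hbad : (z : ℝ) ≤ y := by exact_mod_cast hbad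
  rw [hsplit, abs_le]
  constructor
  · nlinarith [mul_le_mul (by linarith : 2 * a - 2 ≤ x - 1) (by linarith : 2 * b - 1 ≤ y)
      (by linarith) (by linarith)]
  · nlinarith [mul_le_mul (by linarith : (x : ℝ) ≤ 2 * a + 1) (by linarith : (y : ℝ) ≤ 2 * b + 1)
      (by positivity) (by linarith), (Nat.cast_nonneg z : (0 : ℝ) ≤ z)]

lemma abs_card_weierstrassSet_sub_le {Y : ℝ} (hY : 0 ≤ Y) :
    |(Nat.card (weierstrassSet Y) : ℝ) - 4 * Y ^ ((5 : ℝ) / 6)| ≤ 8 * Y ^ ((1 : ℝ) / 2) := by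
  rcases lt_or_ge Y 1 with hY₁ | hY₁
  · have h := Real.rpow_le_rpow_of_exponent_ge' hY hY₁.le (by norm_num)
      (by norm_num : (1 : ℝ) / 2 ≤ 5 / 6)
    rw [weierstrassSet_eq_empty hY₁.le, Nat.card_of_isEmpty, Nat.cast_zero, zero_sub, abs_neg,
      abs_of_nonneg (by positivity)]
    linarith [Real.rpow_nonneg hY ((1 : ℝ) / 2)]
  have hY₀ : 0 < Y := by linarith
  have h := abs_card_filter_disc_ne_zero_sub_le (Real.one_le_rpow hY₁ (by norm_num : (0 : ℝ) ≤ 3⁻¹))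
    (Real.rpow_le_rpow_of_exponent_le hY₁ (by norm_num : (3 : ℝ)⁻¹ ≤ 2⁻¹))
  rw [← Real.rpow_add hY₀, show (3 : ℝ)⁻¹ + 2⁻¹ = 5 / 6 by norm_num] at h
  rwa [Nat.card_coe_set_eq, weierstrassSet_eq_filter hY, Set.ncard_coe_finset, one_div]

def minimalWeierstrassSet (X : ℝ) : Set (ℤ × ℤ) := {p | WeaklyMinimal p.1 p.2 ∧ p ∈ weierstrassSet X}

lemma card_weierstrassSet_eq_sum {X : ℝ} {T : ℕ} (hXT : X ≤ T) :
    Nat.card (weierstrassSet X)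
      = ∑ d ∈ Icc 1 T, Nat.card (minimalWeierstrassSet (X / (d : ℝ) ^ 12)) := by
  have hfin : ∀ Y, (minimalWeierstrassSet Y).Finite :=
    fun Y => (weierstrassSet_finite Y).subset fun p hp => hp.2
  simp_rw [Nat.card_eq_card_finite_toFinset (weierstrassSet_finite X),
    Nat.card_eq_card_finite_toFinset (hfin _), ← card_sigma]
  symm
  refine card_bij (fun q _ => weierstrassScale q.1 q.2) (fun ⟨d, p⟩ hq => ?_)
    (fun ⟨d, p⟩ hq ⟨e, p'⟩ hq' h => ?_) (fun q hq => ?_)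
  · simp only [mem_sigma, mem_Icc, Set.Finite.mem_toFinset] at hq ⊢
    exact (weierstrassScale_mem_weierstrassSet_iff (by omega)).mpr hq.2.2
  · simp only [mem_sigma, mem_Icc, Set.Finite.mem_toFinset] at hq hq' h
    obtain rfl := eq_of_weierstrassScale_eq hq.2.1 hq'.2.1 h
    rw [weierstrassScale_injective (by omega) h]
  · rw [Set.Finite.mem_toFinset] at hq
    have hq₀ : q ≠ 0 := by rintro rfl; simp [weierstrassSet] at hq
    obtain ⟨d, hd, p, hp, rfl⟩ := exists_weierstrassScale_eq hq₀
    have hp₀ : p ≠ 0 := by rintro rfl; simp [weierstrassScale] at hq₀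
    have hd₁ : (1 : ℝ) ≤ d := by exact_mod_cast hd
    have hdT : (d : ℝ) < T :=
      calc (d : ℝ) ≤ (d : ℝ) ^ 12 := le_self_pow₀ hd₁ (by norm_num)
        _ ≤ (d : ℝ) ^ 12 * naiveHeight p :=
          le_mul_of_one_le_right (by positivity) (one_le_naiveHeight hp₀)
        _ = naiveHeight (weierstrassScale d p) := (naiveHeight_weierstrassScale d p).symm
        _ < X := hq.2
        _ ≤ T := hXT
    refine ⟨⟨d, p⟩, ?_, rfl⟩
    simp only [mem_sigma, mem_Icc, Set.Finite.mem_toFinset]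
    exact ⟨⟨hd, by exact_mod_cast hdT.le⟩, hp, (weierstrassScale_mem_weierstrassSet_iff (by omega)).mp hq⟩

lemma minimalWeierstrassSet_eq_empty {X : ℝ} (hX : X ≤ 1) : minimalWeierstrassSet X = ∅ :=
  Set.eq_empty_of_subset_empty fun _ hp => (weierstrassSet_eq_empty hX).subset hp.2

lemma hasSum_moebius_mul_card_weierstrassSet {X : ℝ} (hX : 0 ≤ X) :
    HasSum (fun d : ℕ => (μ d : ℝ) * Nat.card (weierstrassSet (X / (d : ℝ) ^ 12)))
      (Nat.card (minimalWeierstrassSet X)) := by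
  set T := ⌈X⌉₊
  have hXT : X ≤ T := Nat.le_ceil X
  have hsmall : ∀ n : ℕ, T < n → X / (n : ℝ) ^ 12 ≤ 1 := by
    intro n hn
    have hn₁ : (1 : ℝ) ≤ n := by exact_mod_cast (by omega : 1 ≤ n)
    have hTn : (T : ℝ) < n := by exact_mod_cast hn
    rw [div_le_one (by positivity)]
    linarith [le_self_pow₀ hn₁ (by norm_num : 12 ≠ 0)]
  have hinv := sum_Icc_moebius_smul_sum_Icc_mul
    (fun n => (Nat.card (minimalWeierstrassSet (X / (n : ℝ) ^ 12)) : ℝ)) (T := T)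
    fun n hn => by simp [minimalWeierstrassSet_eq_empty (hsmall n hn)]
  have hterm : ∀ d ∈ Icc 1 T,
      μ d • ∑ e ∈ Icc 1 T, (Nat.card (minimalWeierstrassSet (X / ((d * e : ℕ) : ℝ) ^ 12)) : ℝ)
        = μ d * Nat.card (weierstrassSet (X / (d : ℝ) ^ 12)) := by
    intro d hd
    have hd₁ : (1 : ℝ) ≤ d := by exact_mod_cast (mem_Icc.mp hd).1
    rw [zsmul_eq_mul, card_weierstrassSet_eq_sum ((div_le_self hX (one_le_pow₀ hd₁)).trans hXT)]
    push_cast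
    simp only [div_div, mul_pow]
  simp only [Nat.cast_one, one_pow, div_one, sum_congr rfl hterm] at hinv
  rw [← hinv]
  refine hasSum_sum_of_ne_finset_zero fun d hd => ?_
  rcases Nat.eq_zero_or_pos d with rfl | hd₀
  · simp
  · have hTd : T < d := by simp only [mem_Icc, not_and, not_le] at hd; exact hd hd₀
    simp [weierstrassSet_eq_empty (hsmall d hTd)]

lemma div_pow_rpow_of_mul_eq {x y r : ℝ} (hx : 0 ≤ x) (hy : 0 ≤ y) {n k : ℕ} (h : n * r = k) :
    (x / y ^ n) ^ r = x ^ r / y ^ k := by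
  rw [Real.div_rpow hx (by positivity), ← Real.rpow_natCast_mul hy, h, Real.rpow_natCast]

lemma abs_card_minimalWeierstrassSet_sub_le {X : ℝ} (hX : 0 ≤ X) :
    |(Nat.card (minimalWeierstrassSet X) : ℝ) - 4 * zetaTen⁻¹ * X ^ ((5 : ℝ) / 6)|
      ≤ 8 * (∑' d : ℕ, ((d : ℝ) ^ 6)⁻¹) * X ^ ((1 : ℝ) / 2) := by
  have hmain := (hasSum_moebius_mul_card_weierstrassSet hX).sub
    (hasSum_moebius_div_pow_ten.mul_left (4 * X ^ ((5 : ℝ) / 6)))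
  have hbound := (Real.summable_nat_pow_inv.mpr (by norm_num : 1 < 6)).hasSum.mul_left
    (8 * X ^ ((1 : ℝ) / 2))
  rw [← Real.norm_eq_abs, mul_right_comm, mul_right_comm 8]
  refine hmain.norm_le_of_bounded hbound fun d => ?_
  have h₅₆ := div_pow_rpow_of_mul_eq hX (Nat.cast_nonneg d) (n := 12) (k := 10)
    (r := (5 : ℝ) / 6) (by norm_num)
  have h₁₂ := div_pow_rpow_of_mul_eq hX (Nat.cast_nonneg d) (n := 12) (k := 6)
    (r := (1 : ℝ) / 2) (by norm_num)
  have hμ : |(μ d : ℝ)| ≤ 1 := by exact_mod_cast abs_moebius_le_one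
  calc ‖(μ d : ℝ) * Nat.card (weierstrassSet (X / (d : ℝ) ^ 12))
        - 4 * X ^ ((5 : ℝ) / 6) * ((μ d : ℝ) / (d : ℝ) ^ 10)‖
      = |(μ d : ℝ)| * |(Nat.card (weierstrassSet (X / (d : ℝ) ^ 12)) : ℝ)
          - 4 * (X / (d : ℝ) ^ 12) ^ ((5 : ℝ) / 6)| := by
        rw [Real.norm_eq_abs, ← abs_mul, h₅₆]; ring_nf
    _ ≤ 1 * (8 * (X / (d : ℝ) ^ 12) ^ ((1 : ℝ) / 2)) :=
        mul_le_mul hμ (abs_card_weierstrassSet_sub_le (by positivity)) (abs_nonneg _) zero_le_one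
    _ = 8 * X ^ ((1 : ℝ) / 2) * ((d : ℝ) ^ 6)⁻¹ := by rw [h₁₂]; ring

/-- The number of elliptic curves over `ℚ` of naive height less than `X`, counted via
weakly minimal Weierstrass data `(A, B)` with `4A³ + 27B² ≠ 0` and
`max(B², |A|³) < X`, is `4ζ(10)^{-1}X^{5/6} + O(X^{1/2})`. -/
theorem count_bounded_naive_height :
    ∃ K : ℝ, 0 < K ∧ ∀ X : ℝ, 1 ≤ X →
      |(Nat.card {p : ℤ × ℤ | WeaklyMinimal p.1 p.2 ∧
          4 * p.1 ^ 3 + 27 * p.2 ^ 2 ≠ 0 ∧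
          max ((p.2 : ℝ) ^ 2) (|(p.1 : ℝ)| ^ 3) < X} : ℝ)
        - 4 * zetaTen⁻¹ * X ^ ((5 : ℝ) / 6)|
      ≤ K * X ^ ((1 : ℝ) / 2) := by
  have hζ₆ : 0 < ∑' d : ℕ, ((d : ℝ) ^ 6)⁻¹ :=
    (Real.summable_nat_pow_inv.mpr (by norm_num)).tsum_pos (fun _ => by positivity) 1 (by norm_num)
  exact ⟨_, by positivity, fun X hX => abs_card_minimalWeierstrassSet_sub_le (by linarith)⟩
end
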